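/- arXiv:2210.12304 — 3 statements merged into one kernel-verified Lean document; each statement's English description precedes it below -/
import Mathlib

section
/- Define polynomials Φ_0(x) = x and Φ_k(x) = x + Φ_{k-1}(x)² for k ≥ 1. Then for every k ≥ 0, Φ_k(1/4) ≥ 1/2 − 1/(k+4), with strict inequality for k ≥ 1. -/
/-!
Writing `b_k = 1/2 - 1/(k+4)`, one has `1/4 + b_k² = b_{k+1} + 1/(n²(n+1))` with `n = k+4`, so the
map `y ↦ 1/4 + y²`, which is monotone on `[0, ∞)`, sends `b_k` strictly above `b_{k+1}`. Since
`Φ_0(1/4) = 1/4 = b_0`, induction gives `b_k ≤ Φ_k(1/4)`, and one more step makes it strict.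
-/

/-- `Φ_0(x) = x`, `Φ_k(x) = x + Φ_{k-1}(x)²`. -/
def Phi : ℕ → ℝ → ℝ
  | 0, x => x
  | k + 1, x => x + (Phi k x) ^ 2

lemma quarter_add_sq_half_sub_inv {n : ℝ} (hn : n ≠ 0) (hn₁ : n + 1 ≠ 0) :
    1 / 4 + (1 / 2 - 1 / n) ^ 2 = 1 / 2 - 1 / (n + 1) + 1 / (n ^ 2 * (n + 1)) := by
  field_simp
  ring

lemma half_sub_inv_succ_lt_quarter_add_sq {n : ℝ} (hn : 0 < n) :
    1 / 2 - 1 / (n + 1) < 1 / 4 + (1 / 2 - 1 / n) ^ 2 := by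
  rw [quarter_add_sq_half_sub_inv hn.ne' (by positivity)]
  have : 0 < 1 / (n ^ 2 * (n + 1)) := by positivity
  linarith

lemma half_sub_inv_lt_Phi_succ_quarter_of_le {k : ℕ}
    (h : 1 / 2 - 1 / ((k : ℝ) + 4) ≤ Phi k (1 / 4)) :
    1 / 2 - 1 / ((k + 1 : ℕ) + 4 : ℝ) < Phi (k + 1) (1 / 4) := by
  have hb : 0 ≤ 1 / 2 - 1 / ((k : ℝ) + 4) := by
    rw [sub_nonneg, div_le_div_iff₀ (by positivity) two_pos]
    linarith [(Nat.cast_nonneg k : (0 : ℝ) ≤ k)]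
  calc 1 / 2 - 1 / ((k + 1 : ℕ) + 4 : ℝ)
      = 1 / 2 - 1 / ((k + 4 : ℝ) + 1) := by push_cast; ring_nf
    _ < 1 / 4 + (1 / 2 - 1 / ((k : ℝ) + 4)) ^ 2 :=
      half_sub_inv_succ_lt_quarter_add_sq (by positivity)
    _ ≤ 1 / 4 + Phi k (1 / 4) ^ 2 := by gcongr
    _ = Phi (k + 1) (1 / 4) := rfl

lemma half_sub_inv_le_Phi_quarter (k : ℕ) : 1 / 2 - 1 / ((k : ℝ) + 4) ≤ Phi k (1 / 4) := by
  induction k with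
  | zero => norm_num [Phi]
  | succ k ih => exact (half_sub_inv_lt_Phi_succ_quarter_of_le ih).le

/-- For every `k ≥ 0`, `Φ_k(1/4) ≥ 1/2 − 1/(k+4)`, with strict inequality for `k ≥ 1`. -/
theorem Phi_quarter_ge (k : ℕ) :
    Phi k (1 / 4) ≥ 1 / 2 - 1 / (k + 4) ∧
      (1 ≤ k → Phi k (1 / 4) > 1 / 2 - 1 / (k + 4)) := by
  refine ⟨half_sub_inv_le_Phi_quarter k, fun hk => ?_⟩
  obtain ⟨j, rfl⟩ := Nat.exists_eq_add_of_le' hk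
  exact half_sub_inv_lt_Phi_succ_quarter_of_le (half_sub_inv_le_Phi_quarter j)
end

section
/- Define Φ_0(x) = x, Φ_k(x) = x + Φ_{k-1}(x)², and let ξ_k be the unique positive root of Φ_k(x) = 1. Then for all sufficiently large k (in fact for all k ≥ 1), ξ_k < 1/4 + 3/(2k). -/
/-!
Since `x + P² ≥ P + (x - 1/4)` (this is `(P - 1/2)² ≥ 0`), each step of the recursion raises
`Φ` by at least `x - 1/4`, so `Φ_k(x) ≥ x + k (x - 1/4)` for every `x`. At `x = 1/4 + 3/(2k)` this
gives `Φ_k(x) ≥ x + 3/2 > 1`, and `Φ_k` is increasing on `[0, ∞)`, so its root lies to the left.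
-/

open Set

lemma Phi_nonneg (k : ℕ) {x : ℝ} (hx : 0 ≤ x) : 0 ≤ Phi k x := by
  induction k with
  | zero => exact hx
  | succ n _ => rw [Phi]; positivity

lemma Phi_monotoneOn (k : ℕ) : MonotoneOn (Phi k) (Ici 0) := by
  intro a ha b _ hab
  induction k with
  | zero => exact hab
  | succ n ih =>
    have hPa := Phi_nonneg n (mem_Ici.mp ha)
    simp only [Phi]
    gcongr

lemma add_mul_sub_quarter_le_Phi (k : ℕ) (x : ℝ) :
    x + k * (x - 1 / 4) ≤ Phi k x := by
  induction k with
  | zero => simp [Phi]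
  | succ n ih =>
    have step : Phi n x + (x - 1 / 4) ≤ Phi (n + 1) x := by
      rw [Phi]
      nlinarith [sq_nonneg (Phi n x - 1 / 2)]
    push_cast
    linarith

lemma one_lt_Phi_quarter_add {k : ℕ} (hk : 1 ≤ k) : 1 < Phi k (1 / 4 + 3 / (2 * k)) := by
  have hk' : (0 : ℝ) < k := by exact_mod_cast hk
  have hshift : (0 : ℝ) < 3 / (2 * k) := by positivity
  have hslope : (k : ℝ) * (3 / (2 * k)) = 3 / 2 := by field_simp
  have hlower := add_mul_sub_quarter_le_Phi k (1 / 4 + 3 / (2 * k))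
  rw [add_sub_cancel_left, hslope] at hlower
  linarith

theorem xi_lt_quarter_add_general (k : ℕ) (hk : 1 ≤ k) (ξ : ℝ)
    (hroot : Phi k ξ = 1) : ξ < 1 / 4 + 3 / (2 * k) := by
  by_contra! hle
  have hb : (0 : ℝ) ≤ 1 / 4 + 3 / (2 * k) := by positivity
  have hmono := Phi_monotoneOn k hb (hb.trans hle) hle
  linarith [one_lt_Phi_quarter_add hk]

/-- For all `k ≥ 1`, the unique positive root `ξ_k` of `Φ_k(x) = 1` satisfies
`ξ_k < 1/4 + 3/(2k)`. -/
theorem xi_lt_quarter_add (k : ℕ) (hk : 1 ≤ k) (ξ : ℝ) (hpos : 0 < ξ)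
    (hroot : Phi k ξ = 1) : ξ < 1 / 4 + 3 / (2 * k) :=
  xi_lt_quarter_add_general k hk ξ hroot
end

section
/- Define Φ_0(x) = x, Φ_k(x) = x + Φ_{k-1}(x)². If λ is a complex root of Φ_k(x) = 1 with λ ≠ ξ_k (where ξ_k is the unique positive real root), then |λ| > ξ_k. -/
/-!
For `r ≥ 0` the real polynomial `Φ_k` is strictly increasing, and the triangle inequality gives
`‖Φ_k(z)‖ ≤ Φ_k(‖z‖)`. For `k ≥ 1` this is strict unless `z` is a nonnegative real: at the innermost
level `‖z + z²‖ < ‖z‖ + ‖z‖²` because `z` and `z²` point in different directions, and the strict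
inequality survives every further squaring. So a root `λ ≠ ξ_k` of `Φ_k = 1` satisfies
`Φ_k(ξ_k) = 1 < Φ_k(‖λ‖)`, i.e. `ξ_k < ‖λ‖`; a nonnegative real root would equal `ξ_k` by
injectivity.
-/

open Set

def PhiC : ℕ → ℂ → ℂ
  | 0, x => x
  | k + 1, x => x + (PhiC k x) ^ 2

def PhiR : ℕ → ℝ → ℝ
  | 0, x => x
  | k + 1, x => x + (PhiR k x) ^ 2

theorem PhiC_ofReal (k : ℕ) (x : ℝ) : PhiC k x = PhiR k x := by
  induction k with
  | zero => rfl
  | succ k ih => simp [PhiC, PhiR, ih]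

theorem PhiR_nonneg (k : ℕ) {x : ℝ} (hx : 0 ≤ x) : 0 ≤ PhiR k x := by
  cases k with
  | zero => exact hx
  | succ k => exact add_nonneg hx (sq_nonneg _)

theorem PhiR_strictMonoOn (k : ℕ) : StrictMonoOn (PhiR k) (Ici 0) := by
  induction k with
  | zero => exact strictMonoOn_id
  | succ k ih =>
    intro a ha b hb hab
    have hsq : PhiR k a ^ 2 ≤ PhiR k b ^ 2 :=
      pow_le_pow_left₀ (PhiR_nonneg k ha) (ih ha hb hab).le 2
    exact add_lt_add_of_lt_of_le hab hsq

theorem Complex.eq_norm_of_sameRay_sq {z : ℂ} (h : SameRay ℝ z (z ^ 2)) : z = ‖z‖ := by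
  rcases eq_or_ne z 0 with rfl | hz
  · simp
  obtain ⟨r, hr, hrz⟩ := h.exists_pos_left hz (pow_ne_zero 2 hz)
  have hzr : z = r := by
    rw [Complex.real_smul, sq] at hrz
    exact (mul_right_cancel₀ hz hrz).symm
  rw [hzr, Complex.norm_real, Real.norm_of_nonneg hr.le]

theorem norm_PhiC_succ_lt (k : ℕ) {z : ℂ} (hz : z ≠ ‖z‖) : ‖PhiC (k + 1) z‖ < PhiR (k + 1) ‖z‖ := by
  induction k with
  | zero =>
    have hray : ¬SameRay ℝ z (z ^ 2) := fun h => hz (Complex.eq_norm_of_sameRay_sq h)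
    calc ‖z + z ^ 2‖ < ‖z‖ + ‖z ^ 2‖ := not_sameRay_iff_norm_add_lt.mp hray
      _ = PhiR 1 ‖z‖ := by rw [norm_pow]; rfl
  | succ k ih =>
    calc ‖z + PhiC (k + 1) z ^ 2‖ ≤ ‖z‖ + ‖PhiC (k + 1) z‖ ^ 2 :=
          (norm_add_le _ _).trans_eq (by rw [norm_pow])
      _ < ‖z‖ + PhiR (k + 1) ‖z‖ ^ 2 := by
          gcongr (‖z‖ + ?_)
          exact pow_lt_pow_left₀ ih (norm_nonneg _) two_ne_zero

/-- If `λ` is a complex root of `Φ_k(x) = 1` different from the unique positive real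
root `ξ_k`, then `|λ| > ξ_k`. -/
theorem root_abs_gt_xi (k : ℕ) (ξ : ℝ) (hpos : 0 < ξ) (hroot : PhiC k (ξ : ℂ) = 1)
    (lam : ℂ) (hlam : PhiC k lam = 1) (hne : lam ≠ (ξ : ℂ)) :
    ‖lam‖ > ξ := by
  have hξ : PhiR k ξ = 1 := by exact_mod_cast (PhiC_ofReal k ξ).symm.trans hroot
  by_cases hreal : lam = ‖lam‖
  · have hnorm : PhiR k ‖lam‖ = 1 := by
      exact_mod_cast (PhiC_ofReal k ‖lam‖).symm.trans (hreal ▸ hlam)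
    have : ‖lam‖ = ξ :=
      (PhiR_strictMonoOn k).injOn (norm_nonneg lam) hpos.le (hnorm.trans hξ.symm)
    exact absurd (hreal.trans (congrArg _ this)) hne
  cases k with
  | zero => exact absurd (by simp [show lam = 1 from hlam]) hreal
  | succ k =>
    have hlt : PhiR (k + 1) ξ < PhiR (k + 1) ‖lam‖ :=
      calc PhiR (k + 1) ξ = ‖PhiC (k + 1) lam‖ := by rw [hξ, hlam, norm_one]
        _ < PhiR (k + 1) ‖lam‖ := norm_PhiC_succ_lt k hreal
    exact ((PhiR_strictMonoOn (k + 1)).lt_iff_lt hpos.le (norm_nonneg lam)).mp hlt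
end
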